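/- arXiv:2106.10967 — 7 statements merged into one kernel-verified Lean document; each statement's English description precedes it below -/
import Mathlib

section
/- Let G be a connected simple graph with λ := λ₁(G) > 2 and σ := (λ + √(λ² − 4))/2. Let x be a principal eigenvector of G, let v₁ be a vertex attaining the minimum entry of x and v_k a vertex attaining the maximum entry of x, and let v₁, v₂, …, v_k be a path in G from v₁ to v_k (of length k − 1). Then for every j with 1 ≤ j ≤ k, the principal ratio satisfies γ(G) ≤ ((σ^j − σ^{−j})/(σ − σ^{−1})) · (1/x_{v_j}). Moreover, equality holds if the vertices v₁, v₂, …, v_j form a pendant path in G (i.e., v₁ has degree one and v₂, …, v_{j} each have degree two along the path, with internal vertices of degree two). -/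
open Classical Matrix

/-- The adjacency matrix of a simple graph on `Fin n`, with real entries. -/
noncomputable def adjMat {n : ℕ} (G : SimpleGraph (Fin n)) : Matrix (Fin n) (Fin n) ℝ :=
  Matrix.of fun u v => if G.Adj u v then (1 : ℝ) else 0

/-- `x` is a principal (Perron) eigenvector of the connected graph `G` with eigenvalue `lam`:
it is a positive eigenvector of the adjacency matrix.  By Perron–Frobenius, for a connected
graph this forces `lam = λ₁(G)`. -/
def IsPrincipalEigenpair {n : ℕ} (G : SimpleGraph (Fin n)) (lam : ℝ) (x : Fin n → ℝ) : Prop :=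
  (∀ v, 0 < x v) ∧ adjMat G *ᵥ x = lam • x

/-- The ratio of the maximum to the minimum entry of a vector. -/
noncomputable def pRatio {n : ℕ} (x : Fin n → ℝ) : ℝ := (⨆ v, x v) / (⨅ v, x v)

/-- Degree of a vertex. -/
noncomputable def deg {n : ℕ} (G : SimpleGraph (Fin n)) (v : Fin n) : ℕ :=
  (G.neighborSet v).ncard

/-- The kite (lollipop) graph on `Fin n`: a path on the vertices `0, 1, …, r-1`
followed by a clique on the vertices `r-1, r, …, n-1`, i.e. `P_r · K_{n-r+1}`. -/
def kiteGraph (n r : ℕ) : SimpleGraph (Fin n) where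
  Adj u v := u ≠ v ∧
    ((u.val < r ∧ v.val < r ∧ (u.val + 1 = v.val ∨ v.val + 1 = u.val)) ∨
      (r ≤ u.val + 1 ∧ r ≤ v.val + 1))
  symm := by
    constructor
    rintro u v ⟨h1, h2⟩
    exact ⟨h1.symm, by tauto⟩
  loopless := by
    constructor
    rintro u ⟨h1, -⟩
    exact h1 rfl

noncomputable def sigma' (lam : ℝ) : ℝ := (lam + Real.sqrt (lam ^ 2 - 4)) / 2

/-!
Write `λ = σ + σ⁻¹` and `U_j = (σ^j - σ^{-j}) / (σ - σ⁻¹)`, the solution of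
`U_{j+2} = λ U_{j+1} - U_j` with `U_0 = 0`, `U_1 = 1`. Along the path `v_0, …, v_{k-1}`, writing
`x_i` for the entry at `v_i`, the eigenvalue equation at `v_{i+1}` gives `x_{i+2} + x_i ≤ λ x_{i+1}`, since `v_i` and `v_{i+2}` are two of its neighbours,
and at `v_0` it gives `x_1 ≤ λ x_0`; both are equalities at a vertex of degree two, resp. one.
A sequence obeying this sub-recurrence is dominated by `U_{i+1} x_0`: the differences
`x_{i+1} - σ⁻¹ x_i` grow at most by the factor `σ` at each step. Hence `x_{j-1} ≤ U_j x_0`,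
with equality along a pendant path, and `γ = 1 / x_0` because the maximum entry is `1`.
-/

noncomputable def chebU (s : ℝ) (j : ℕ) : ℝ := (s ^ j - (s ^ j)⁻¹) / (s - s⁻¹)

lemma sub_inv_ne_zero_of_pos {s : ℝ} (hs : 0 < s) (hs1 : s ≠ 1) : s - s⁻¹ ≠ 0 := by
  rw [sub_ne_zero]
  intro h
  have : s * s = 1 := by nth_rewrite 2 [h]; exact mul_inv_cancel₀ hs.ne'
  rcases mul_self_eq_one_iff.1 this with h1 | h1
  · exact hs1 h1
  · linarith

lemma chebU_one {s : ℝ} (hs : s - s⁻¹ ≠ 0) : chebU s 1 = 1 := by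
  rw [chebU, pow_one, div_self hs]

lemma chebU_succ {s : ℝ} (hs : s - s⁻¹ ≠ 0) (j : ℕ) :
    chebU s (j + 1) = s⁻¹ * chebU s j + s ^ j := by
  have hs0 : s ≠ 0 := by rintro rfl; simp at hs
  rw [chebU, chebU, mul_div_assoc', div_add' _ _ _ hs, div_left_inj' hs]
  field_simp
  ring

theorem le_chebU_mul_of_le_recurrence {s : ℝ} (hs : 0 < s) (hs1 : s ≠ 1) {a : ℕ → ℝ} {m : ℕ}
    (h₁ : 1 < m → a 1 ≤ (s + s⁻¹) * a 0)
    (h₂ : ∀ i, i + 2 < m → a (i + 2) ≤ (s + s⁻¹) * a (i + 1) - a i) :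
    ∀ i < m, a i ≤ chebU s (i + 1) * a 0 := by
  have hs' := sub_inv_ne_zero_of_pos hs hs1
  have hdiff : ∀ i, i + 1 < m → a (i + 1) - s⁻¹ * a i ≤ s ^ (i + 1) * a 0 := by
    intro i
    induction i with
    | zero => intro hm; linarith [h₁ (by omega)]
    | succ i ih =>
      intro hm
      have hcancel : s * (a (i + 1) - s⁻¹ * a i) = s * a (i + 1) - a i := by
        rw [mul_sub, ← mul_assoc, mul_inv_cancel₀ hs.ne', one_mul]
      calc a (i + 2) - s⁻¹ * a (i + 1) ≤ s * (a (i + 1) - s⁻¹ * a i) := by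
            linarith [h₂ i hm]
        _ ≤ s * (s ^ (i + 1) * a 0) := mul_le_mul_of_nonneg_left (ih (by omega)) hs.le
        _ = s ^ (i + 2) * a 0 := by ring
  intro i
  induction i with
  | zero => intro _; rw [chebU_one hs', one_mul]
  | succ i ih =>
    intro hm
    have := mul_le_mul_of_nonneg_left (ih (by omega)) (inv_pos.2 hs).le
    rw [chebU_succ hs']
    linarith [hdiff i hm]

theorem eq_chebU_mul_of_recurrence {s : ℝ} (hs : 0 < s) (hs1 : s ≠ 1) {a : ℕ → ℝ} {m : ℕ}
    (h₁ : 1 < m → a 1 = (s + s⁻¹) * a 0)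
    (h₂ : ∀ i, i + 2 < m → a (i + 2) = (s + s⁻¹) * a (i + 1) - a i) :
    ∀ i < m, a i = chebU s (i + 1) * a 0 := by
  have hle := le_chebU_mul_of_le_recurrence hs hs1 (fun h => (h₁ h).le) (fun i h => (h₂ i h).le)
  have hge := le_chebU_mul_of_le_recurrence (a := fun i => -a i) hs hs1
    (fun h => by linarith [h₁ h]) (fun i h => by linarith [h₂ i h])
  intro i hi
  linarith [hle i hi, hge i hi]

lemma sigma'_add_inv {lam : ℝ} (hlam : 2 ≤ lam) : sigma' lam + (sigma' lam)⁻¹ = lam := by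
  have hsq := Real.sq_sqrt (show 0 ≤ lam ^ 2 - 4 by nlinarith)
  have hmul : sigma' lam * (lam - sigma' lam) = 1 := by
    rw [sigma']
    linear_combination (-(1 : ℝ) / 4) * hsq
  rw [inv_eq_of_mul_eq_one_right hmul]
  ring

lemma one_lt_sigma' {lam : ℝ} (hlam : 2 < lam) : 1 < sigma' lam := by
  rw [sigma']
  nlinarith [Real.sqrt_nonneg (lam ^ 2 - 4)]

lemma pRatio_eq_div {n : ℕ} {x : Fin n → ℝ} {u₀ u₁ : Fin n} (hmin : ∀ u, x u₀ ≤ x u)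
    (hmax : ∀ u, x u ≤ x u₁) : pRatio x = x u₁ / x u₀ := by
  have : Nonempty (Fin n) := ⟨u₀⟩
  rw [pRatio, le_antisymm (ciSup_le hmax) (le_ciSup (Set.finite_range x).bddAbove u₁),
    le_antisymm (ciInf_le (Set.finite_range x).bddBelow u₀) (le_ciInf hmin)]

lemma deg_eq_card_neighborFinset {n : ℕ} (G : SimpleGraph (Fin n)) (w : Fin n) :
    deg G w = (G.neighborFinset w).card := by
  rw [deg, Set.ncard_eq_toFinset_card']
  rfl

def AdjChain {n k : ℕ} (G : SimpleGraph (Fin n)) (v : Fin k → Fin n) : Prop :=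
  ∀ (i : ℕ) (hi : i + 1 < k), G.Adj (v ⟨i, Nat.lt_of_succ_lt hi⟩) (v ⟨i + 1, hi⟩)

noncomputable def valuesAlong {n k : ℕ} (x : Fin n → ℝ) (v : Fin k → Fin n) (i : ℕ) : ℝ :=
  if h : i < k then x (v ⟨i, h⟩) else 0

lemma valuesAlong_of_lt {n k : ℕ} (x : Fin n → ℝ) (v : Fin k → Fin n) {i : ℕ} (h : i < k) :
    valuesAlong x v i = x (v ⟨i, h⟩) :=
  dif_pos h

namespace IsPrincipalEigenpair

variable {n : ℕ} {G : SimpleGraph (Fin n)} {lam : ℝ} {x : Fin n → ℝ}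

lemma mul_eq_sum_neighborFinset (hpe : IsPrincipalEigenpair G lam x) (w : Fin n) :
    lam * x w = ∑ u ∈ G.neighborFinset w, x u := by
  have h := congrFun hpe.2 w
  simp only [Matrix.mulVec, dotProduct, adjMat, Matrix.of_apply, Pi.smul_apply,
    smul_eq_mul, ite_mul, one_mul, zero_mul] at h
  rw [← h, SimpleGraph.neighborFinset_eq_filter, Finset.sum_filter]

lemma sum_le_mul (hpe : IsPrincipalEigenpair G lam x) {w : Fin n} {s : Finset (Fin n)}
    (hs : s ⊆ G.neighborFinset w) : ∑ u ∈ s, x u ≤ lam * x w := by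
  rw [hpe.mul_eq_sum_neighborFinset]
  exact Finset.sum_le_sum_of_subset_of_nonneg hs fun u _ _ => (hpe.1 u).le

lemma sum_eq_mul (hpe : IsPrincipalEigenpair G lam x) {w : Fin n} {s : Finset (Fin n)}
    (hs : s ⊆ G.neighborFinset w) (hdeg : deg G w ≤ s.card) : ∑ u ∈ s, x u = lam * x w := by
  rw [hpe.mul_eq_sum_neighborFinset,
    Finset.eq_of_subset_of_card_le hs (deg_eq_card_neighborFinset G w ▸ hdeg)]

lemma singleton_subset_neighborFinset {w u : Fin n} (h : G.Adj w u) :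
    {u} ⊆ G.neighborFinset w :=
  Finset.singleton_subset_iff.2 (by simpa using h)

lemma pair_subset_neighborFinset {w u₁ u₂ : Fin n} (h₁ : G.Adj w u₁) (h₂ : G.Adj w u₂) :
    {u₁, u₂} ⊆ G.neighborFinset w :=
  Finset.insert_subset_iff.2 ⟨by simpa using h₁, singleton_subset_neighborFinset h₂⟩

variable {k : ℕ} {v : Fin k → Fin n}

lemma le_mul_of_adjChain (hpe : IsPrincipalEigenpair G lam x)
    (hpath : AdjChain G v) (h1 : 1 < k) :
    x (v ⟨1, h1⟩) ≤ lam * x (v ⟨0, Nat.zero_lt_of_lt h1⟩) := by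
  simpa using hpe.sum_le_mul (singleton_subset_neighborFinset (hpath 0 h1))

lemma add_le_mul_of_adjChain (hpe : IsPrincipalEigenpair G lam x) (hinj : Function.Injective v)
    (hpath : AdjChain G v) {i : ℕ} (hi : i + 2 < k) :
    x (v ⟨i + 2, hi⟩) + x (v ⟨i, Nat.lt_of_add_right_lt hi⟩) ≤
      lam * x (v ⟨i + 1, Nat.lt_of_succ_lt hi⟩) := by
  have hne : v ⟨i + 2, hi⟩ ≠ v ⟨i, by omega⟩ := fun h => by simpa using hinj h
  rw [← Finset.sum_pair hne]
  exact hpe.sum_le_mul (pair_subset_neighborFinset (hpath (i + 1) hi) (hpath i (by omega)).symm)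

lemma eq_mul_of_adjChain_of_deg_eq_one (hpe : IsPrincipalEigenpair G lam x)
    (hpath : AdjChain G v) (h1 : 1 < k) (hdeg : deg G (v ⟨0, Nat.zero_lt_of_lt h1⟩) = 1) :
    x (v ⟨1, h1⟩) = lam * x (v ⟨0, Nat.zero_lt_of_lt h1⟩) := by
  simpa using hpe.sum_eq_mul (singleton_subset_neighborFinset (hpath 0 h1)) hdeg.le

lemma add_eq_mul_of_adjChain_of_deg_eq_two (hpe : IsPrincipalEigenpair G lam x)
    (hinj : Function.Injective v) (hpath : AdjChain G v) {i : ℕ} (hi : i + 2 < k)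
    (hdeg : deg G (v ⟨i + 1, Nat.lt_of_succ_lt hi⟩) = 2) :
    x (v ⟨i + 2, hi⟩) + x (v ⟨i, Nat.lt_of_add_right_lt hi⟩) =
      lam * x (v ⟨i + 1, Nat.lt_of_succ_lt hi⟩) := by
  have hne : v ⟨i + 2, hi⟩ ≠ v ⟨i, by omega⟩ := fun h => by simpa using hinj h
  rw [← Finset.sum_pair hne]
  exact hpe.sum_eq_mul (pair_subset_neighborFinset (hpath (i + 1) hi) (hpath i (by omega)).symm)
    (by rw [hdeg, Finset.card_pair hne])

theorem le_chebU_mul_of_adjChain (hpe : IsPrincipalEigenpair G lam x) {σ : ℝ} (hσ : 0 < σ)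
    (hσ1 : σ ≠ 1) (hlam : σ + σ⁻¹ = lam) (hk : 0 < k) (hinj : Function.Injective v)
    (hpath : AdjChain G v) :
    ∀ i (hi : i < k), x (v ⟨i, hi⟩) ≤ chebU σ (i + 1) * x (v ⟨0, hk⟩) := by
  intro i hi
  rw [← valuesAlong_of_lt x v hi, ← valuesAlong_of_lt x v hk]
  refine le_chebU_mul_of_le_recurrence hσ hσ1 (fun h1 => ?_) (fun i hi => ?_) i hi
  · rw [valuesAlong_of_lt x v hk, valuesAlong_of_lt x v h1, hlam]
    exact hpe.le_mul_of_adjChain hpath h1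
  · rw [valuesAlong_of_lt x v hi, valuesAlong_of_lt x v (Nat.lt_of_succ_lt hi),
      valuesAlong_of_lt x v (Nat.lt_of_add_right_lt hi), hlam, le_sub_iff_add_le]
    exact hpe.add_le_mul_of_adjChain hinj hpath hi

theorem eq_chebU_mul_of_adjChain_of_pendant (hpe : IsPrincipalEigenpair G lam x) {σ : ℝ}
    (hσ : 0 < σ) (hσ1 : σ ≠ 1) (hlam : σ + σ⁻¹ = lam) (hk : 0 < k) (hinj : Function.Injective v)
    (hpath : AdjChain G v)
    {j : ℕ} (hjk : j ≤ k) (hdeg₀ : deg G (v ⟨0, hk⟩) = 1)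
    (hdeg : ∀ i, 1 ≤ i → ∀ hi : i + 1 < j,
      deg G (v ⟨i, (Nat.lt_of_succ_lt hi).trans_le hjk⟩) = 2) :
    ∀ i (hi : i < j), x (v ⟨i, hi.trans_le hjk⟩) = chebU σ (i + 1) * x (v ⟨0, hk⟩) := by
  intro i hi
  rw [← valuesAlong_of_lt x v (hi.trans_le hjk), ← valuesAlong_of_lt x v hk]
  refine eq_chebU_mul_of_recurrence hσ hσ1 (fun h1 => ?_) (fun i hi => ?_) i hi
  · rw [valuesAlong_of_lt x v hk, valuesAlong_of_lt x v (h1.trans_le hjk), hlam]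
    exact hpe.eq_mul_of_adjChain_of_deg_eq_one hpath (h1.trans_le hjk) hdeg₀
  · have hik : i + 2 < k := hi.trans_le hjk
    rw [valuesAlong_of_lt x v hik, valuesAlong_of_lt x v (Nat.lt_of_succ_lt hik),
      valuesAlong_of_lt x v (Nat.lt_of_add_right_lt hik), hlam, eq_sub_iff_add_eq]
    exact hpe.add_eq_mul_of_adjChain_of_deg_eq_two hinj hpath hik
      (hdeg (i + 1) (by omega) (by omega))

end IsPrincipalEigenpair

/-- Cioabă–Gregory / Tait–Tobin upper bound for the principal ratio along a path from a
minimum-entry vertex to a maximum-entry vertex, with equality when `v₁, …, v_j` form a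
pendant path.  The principal eigenvector is scaled so that its maximum entry is `1`. -/
theorem principal_ratio_upper_bound
    {n k : ℕ} (G : SimpleGraph (Fin n))
    (lam : ℝ) (x : Fin n → ℝ) (hpe : IsPrincipalEigenpair G lam x) (hlam : 2 < lam)
    (hk : 1 ≤ k) (v : Fin k → Fin n) (hinj : Function.Injective v)
    (hpath : ∀ (i : ℕ) (hi : i + 1 < k), G.Adj (v ⟨i, by omega⟩) (v ⟨i + 1, hi⟩))
    (hmin : ∀ u, x (v ⟨0, by omega⟩) ≤ x u)
    (hmax : ∀ u, x u ≤ 1)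
    (hscale : x (v ⟨k - 1, by omega⟩) = 1) :
    ∀ (j : ℕ) (_hj1 : 1 ≤ j) (_hjk : j ≤ k),
      pRatio x ≤ (sigma' lam ^ j - (sigma' lam ^ j)⁻¹) / (sigma' lam - (sigma' lam)⁻¹) *
          (1 / x (v ⟨j - 1, by omega⟩)) ∧
      ((deg G (v ⟨0, by omega⟩) = 1 ∧
          ∀ (i : ℕ) (_h1 : 1 ≤ i) (_h2 : i + 1 < j), deg G (v ⟨i, by omega⟩) = 2) →
        pRatio x = (sigma' lam ^ j - (sigma' lam ^ j)⁻¹) / (sigma' lam - (sigma' lam)⁻¹) *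
          (1 / x (v ⟨j - 1, by omega⟩))) := by
  intro j hj1 hjk
  have hσ := one_lt_sigma' hlam
  have hσlam := sigma'_add_inv hlam.le
  have hratio : pRatio x = 1 / x (v ⟨0, by omega⟩) := by
    rw [pRatio_eq_div hmin (fun u => hscale ▸ hmax u), hscale]
  have hx := hpe.1
  rw [hratio, mul_one_div]
  refine ⟨?_, fun ⟨hdeg₀, hdeg⟩ => ?_⟩
  · have h := hpe.le_chebU_mul_of_adjChain (by linarith) hσ.ne' hσlam hk hinj hpath (j - 1)
      (by omega)
    rw [Nat.sub_add_cancel hj1] at h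
    rw [div_le_div_iff₀ (hx _) (hx _)]
    exact (one_mul _).trans_le h
  · have h := hpe.eq_chebU_mul_of_adjChain_of_pendant (by linarith) hσ.ne' hσlam hk hinj hpath
      hjk hdeg₀ hdeg (j - 1) (by omega)
    rw [Nat.sub_add_cancel hj1] at h
    rw [div_eq_div_iff (hx _).ne' (hx _).ne']
    exact (one_mul _).trans h
end

section
/- Let λ > 2 be a real number and set σ = (λ + √(λ² − 4))/2. Then for every integer j ≥ 2, (σ^j − σ^{−j})/(σ − σ^{−1}) ≤ (λ − 1/λ)^{j−2} · λ. -/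
/-- For `λ > 2` and `σ = (λ + √(λ² − 4))/2`, for every integer `j ≥ 2`,
`(σ^j − σ^{−j})/(σ − σ^{−1}) ≤ (λ − 1/λ)^{j−2} · λ`. -/
theorem sigma_ratio_upper_bound (lam : ℝ) (hlam : 2 < lam) (j : ℕ) (hj : 2 ≤ j) :
    (sigma' lam ^ j - (sigma' lam ^ j)⁻¹) / (sigma' lam - (sigma' lam)⁻¹) ≤
      (lam - 1 / lam) ^ (j - 2) * lam := by
  set s := sigma' lam with hsdef
  have hlam0 : (0:ℝ) < lam := by linarith
  have hd : (0:ℝ) ≤ lam ^ 2 - 4 := by nlinarith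
  have hr : Real.sqrt (lam ^ 2 - 4) ^ 2 = lam ^ 2 - 4 := Real.sq_sqrt hd
  have hr0 : 0 ≤ Real.sqrt (lam ^ 2 - 4) := Real.sqrt_nonneg _
  have hs1 : 1 < s := by rw [hsdef, sigma']; nlinarith
  have hs0 : 0 < s := lt_trans one_pos hs1
  have hne : s ≠ 0 := ne_of_gt hs0
  have hmul : s * (lam - s) = 1 := by
    rw [hsdef, sigma']; nlinarith
  have hinv : s⁻¹ = lam - s := by
    field_simp
    nlinarith [hmul]
  have hlams : s + s⁻¹ = lam := by rw [hinv]; ring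
  -- nonnegativity of g n = s^n - (s^n)⁻¹
  have hg0 : ∀ n : ℕ, 0 ≤ s ^ n - (s ^ n)⁻¹ := by
    intro n
    have h1 : (1:ℝ) ≤ s ^ n := one_le_pow₀ hs1.le
    have h2 : (s ^ n)⁻¹ ≤ 1 := inv_le_one_of_one_le₀ h1
    linarith
  -- recurrence
  have hrec : ∀ n : ℕ, s ^ (n+2) - (s ^ (n+2))⁻¹
      = lam * (s ^ (n+1) - (s ^ (n+1))⁻¹) - (s ^ n - (s ^ n)⁻¹) := by
    intro n
    rw [← hlams]
    field_simp
    ring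
  have hlaminv : 0 ≤ lam - 1 / lam := by
    have : 1 / lam < 1 := by rw [div_lt_one hlam0]; linarith
    linarith
  -- step: g (k+3) ≤ (lam - 1/lam) * g (k+2)
  have hstep : ∀ k : ℕ, s ^ (k+3) - (s ^ (k+3))⁻¹
      ≤ (lam - 1 / lam) * (s ^ (k+2) - (s ^ (k+2))⁻¹) := by
    intro k
    have h1 := hrec (k+1)
    have h2 := hrec k
    have h3 := hg0 k
    have h4 := hg0 (k+1)
    -- lam * g(k+1) = g(k+2) + g k ≥ g(k+2)
    have h5 : s ^ (k+2) - (s ^ (k+2))⁻¹ ≤ lam * (s ^ (k+1) - (s ^ (k+1))⁻¹) := by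
      linarith
    have hl : (lam - 1/lam) = (lam * lam - 1) / lam := by field_simp
    rw [hl, div_mul_eq_mul_div, le_div_iff₀ hlam0]
    simp only [show k+1+2 = k+3 from rfl] at h1
    nlinarith [h5, hg0 (k+2)]
  -- main induction
  have main : ∀ k : ℕ, s ^ (k+2) - (s ^ (k+2))⁻¹
      ≤ (lam - 1 / lam) ^ k * lam * (s - s⁻¹) := by
    intro k
    induction k with
    | zero =>
      have h := hrec 0
      norm_num at h ⊢
      linarith
    | succ n ih =>
      have h1 := hstep n
      have h2 : (lam - 1/lam) * (s ^ (n+2) - (s ^ (n+2))⁻¹)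
          ≤ (lam - 1/lam) * ((lam - 1/lam) ^ n * lam * (s - s⁻¹)) :=
        mul_le_mul_of_nonneg_left ih hlaminv
      simp only [show n+1+2 = n+3 from rfl]
      calc s ^ (n+3) - (s ^ (n+3))⁻¹ ≤ (lam - 1/lam) * (s ^ (n+2) - (s ^ (n+2))⁻¹) := h1
        _ ≤ (lam - 1/lam) * ((lam - 1/lam) ^ n * lam * (s - s⁻¹)) := h2
        _ = (lam - 1/lam) ^ (n+1) * lam * (s - s⁻¹) := by ring
  -- conclude
  obtain ⟨k, rfl⟩ : ∃ k, j = k + 2 := ⟨j - 2, by omega⟩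
  have hden : 0 < s - s⁻¹ := by
    have : s⁻¹ < 1 := inv_lt_one_of_one_lt₀ hs1
    linarith
  rw [div_le_iff₀ hden]
  have : k + 2 - 2 = k := by omega
  rw [this]
  calc s ^ (k+2) - (s ^ (k+2))⁻¹ ≤ (lam - 1/lam) ^ k * lam * (s - s⁻¹) := main k
    _ = (lam - 1/lam) ^ k * lam * (s - s⁻¹) := rfl
end

section
/- Let n ≥ e^e be a real number and define f_n(x) = (n − x)^x for 1 < x < n. Then f_n is strictly increasing on the interval 1 < x < n − (n/log n)·(1 + 1/√(log n)). -/
open Real Set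

/-- For real `n ≥ e^e`, the function `f_n(x) = (n − x)^x` is strictly increasing on the
interval `1 < x < n − (n/log n)·(1 + 1/√(log n))`. -/
theorem f_strictMonoOn (n : ℝ) (hn : Real.exp (Real.exp 1) ≤ n) :
    StrictMonoOn (fun x : ℝ => (n - x) ^ x)
      (Set.Ioo 1 (n - n / Real.log n * (1 + 1 / Real.sqrt (Real.log n)))) := by
  set L := Real.log n with hLdef
  have hn0 : (0:ℝ) < n := lt_of_lt_of_le (Real.exp_pos _) hn
  have hL : Real.exp 1 ≤ L := by
    have h := Real.log_le_log (Real.exp_pos _) hn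
    rwa [Real.log_exp] at h
  have he : (2:ℝ) < Real.exp 1 := by
    have := Real.exp_one_gt_d9; linarith
  have hL1 : (1:ℝ) < L := by linarith
  have hL0 : (0:ℝ) < L := by linarith
  set s := Real.sqrt L with hsdef
  have hs2 : s ^ 2 = L := Real.sq_sqrt hL0.le
  have hs0 : 0 < s := Real.sqrt_pos.2 hL0
  have hs1 : 1 < s := by nlinarith
  -- log L ≤ s
  have hlogs : Real.log s ≤ s / Real.exp 1 := by
    have h1 : Real.log (s / Real.exp 1) ≤ s / Real.exp 1 - 1 :=
      Real.log_le_sub_one_of_pos (by positivity)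
    rw [Real.log_div (ne_of_gt hs0) (ne_of_gt (Real.exp_pos 1)), Real.log_exp] at h1
    linarith
  have hlogL : Real.log L ≤ s := by
    have h2 : Real.log L = 2 * Real.log s := by
      rw [← hs2, Real.log_pow]; push_cast; ring
    have h3 : s / Real.exp 1 ≤ s / 2 :=
      div_le_div_of_nonneg_left hs0.le (by norm_num) he.le
    rw [h2]; linarith
  have hsL : s < L := by nlinarith
  have hnL : L < n := by have := Real.log_le_sub_one_of_pos hn0; linarith
  set c := n / L * (1 + 1 / s) with hcdef
  have hc0 : 0 < c := by positivity
  have hc1 : 1 < c := by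
    have h1 : 1 < n / L := (one_lt_div hL0).2 hnL
    have h2 : (1:ℝ) ≤ 1 + 1 / s := by
      have := one_div_pos.2 hs0; linarith
    nlinarith
  have hlogc : L - Real.log L ≤ Real.log c := by
    rw [hcdef, Real.log_mul (by positivity) (by positivity),
      Real.log_div (ne_of_gt hn0) (ne_of_gt hL0)]
    have h4 : (0:ℝ) ≤ Real.log (1 + 1 / s) := Real.log_nonneg (by have := one_div_pos.2 hs0; linarith)
    linarith
  -- key inequality
  have hkey : L ≤ (1 + 1 / s) * (L - Real.log L + 1) := by
    have hmul : s * L ≤ (s + 1) * (L - Real.log L + 1) := by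
      nlinarith [mul_le_mul_of_nonneg_left hlogL (by linarith : (0:ℝ) ≤ s + 1)]
    have : (1 + 1 / s) * (L - Real.log L + 1) = ((s + 1) * (L - Real.log L + 1)) / s := by
      field_simp
    rw [this, le_div_iff₀ hs0]
    linarith
  have hcn : n ≤ c * (Real.log c + 1) := by
    have hA : L - Real.log L + 1 ≤ Real.log c + 1 := by linarith
    have hA0 : (0:ℝ) < L - Real.log L + 1 := by linarith
    have h5 : n / L * L ≤ n / L * ((1 + 1 / s) * (L - Real.log L + 1)) :=
      mul_le_mul_of_nonneg_left hkey (by positivity)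
    have h6 : n / L * L = n := by field_simp
    have h7 : n / L * ((1 + 1 / s) * (L - Real.log L + 1)) = c * (L - Real.log L + 1) := by
      rw [hcdef]; ring
    have h8 : c * (L - Real.log L + 1) ≤ c * (Real.log c + 1) :=
      mul_le_mul_of_nonneg_left hA hc0.le
    linarith
  -- positivity of derivative
  have hpos : ∀ x ∈ Set.Ioo 1 (n - c), 0 < Real.log (n - x) - x / (n - x) := by
    intro x hx
    obtain ⟨hx1, hx2⟩ := hx
    have hb : c < n - x := by linarith
    have hb0 : (0:ℝ) < n - x := by linarith
    have hlogbc : Real.log c < Real.log (n - x) := Real.log_lt_log hc0 hb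
    have hlogc0 : 0 < Real.log c + 1 := by linarith
    have hprod : c * (Real.log c + 1) < (n - x) * (Real.log (n - x) + 1) := by
      nlinarith
    have hx' : x < Real.log (n - x) * (n - x) := by nlinarith
    have := (div_lt_iff₀ hb0).2 hx'
    linarith
  -- strict monotonicity of x * log (n - x)
  have hg : StrictMonoOn (fun x : ℝ => x * Real.log (n - x)) (Set.Ioo 1 (n - c)) := by
    apply strictMonoOn_of_deriv_pos (convex_Ioo _ _)
    · apply ContinuousOn.mul continuousOn_id
      apply ContinuousOn.log ((continuous_const.sub continuous_id).continuousOn)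
      intro x hx
      have : (0:ℝ) < n - x := by
        obtain ⟨_, hx2⟩ := hx; linarith
      exact ne_of_gt this
    · rw [interior_Ioo]
      intro x hx
      have hb0 : (0:ℝ) < n - x := by
        obtain ⟨_, hx2⟩ := hx; linarith
      have h1 : HasDerivAt (fun y : ℝ => n - y) (-1) x := by
        simpa using (hasDerivAt_id x).const_sub n
      have h2 : HasDerivAt (fun y : ℝ => Real.log (n - y)) (-1 / (n - x)) x :=
        h1.log (ne_of_gt hb0)
      have h3 : HasDerivAt (fun y : ℝ => y * Real.log (n - y))
          (1 * Real.log (n - x) + x * (-1 / (n - x))) x := (hasDerivAt_id x).mul h2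
      rw [h3.deriv]
      have h4 := hpos x hx
      have h5 : x * (-1 / (n - x)) = -(x / (n - x)) := by ring
      linarith
  -- conclude
  intro a ha b hb hab
  have ha0 : (0:ℝ) < n - a := by
    obtain ⟨_, ha2⟩ := ha; linarith
  have hb0 : (0:ℝ) < n - b := by
    obtain ⟨_, hb2⟩ := hb; linarith
  have h := hg ha hb hab
  simp only at h ⊢
  rw [Real.rpow_def_of_pos ha0, Real.rpow_def_of_pos hb0]
  exact Real.exp_lt_exp.2 (by rw [mul_comm, mul_comm (Real.log (n - b))]; exact h)
end

section
/- Let n ≥ 5000 be a real number and define g(x) = log(n − x) − n/(n − x) + 1. Then g(n − (n/log n)·(1 + 1/√(log n))) > 0. -/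
/-- For real `n ≥ 5000` and `g(x) = log(n − x) − n/(n − x) + 1`, one has
`g(n − (n/log n)·(1 + 1/√(log n))) > 0`. -/
theorem g_pos (n : ℝ) (hn : 5000 ≤ n) :
    0 < Real.log (n - (n - n / Real.log n * (1 + 1 / Real.sqrt (Real.log n)))) -
        n / (n - (n - n / Real.log n * (1 + 1 / Real.sqrt (Real.log n)))) + 1 := by
  have hn0 : (0:ℝ) < n := by linarith
  set L := Real.log n with hLdef
  have hL : 0 < L := Real.log_pos (by linarith)
  set s := Real.sqrt L with hsdef
  have hs0 : 0 < s := Real.sqrt_pos.2 hL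
  have hsq : s ^ 2 = L := Real.sq_sqrt hL.le
  have h1s : (1:ℝ) < 1 + 1 / s := by
    have : 0 < 1 / s := by positivity
    linarith
  have hy0 : 0 < n / L * (1 + 1 / s) := by positivity
  have hsimp : n - (n - n / L * (1 + 1 / s)) = n / L * (1 + 1 / s) := by ring
  rw [hsimp]
  have hlogy : Real.log (n / L * (1 + 1 / s)) = L - Real.log L + Real.log (1 + 1 / s) := by
    rw [Real.log_mul (by positivity) (by positivity), Real.log_div hn0.ne' hL.ne']
  have hny : n / (n / L * (1 + 1 / s)) = L * s / (s + 1) := by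
    have h1 : (1 : ℝ) + 1 / s = (s + 1) / s := by field_simp
    rw [h1]
    field_simp
  rw [hlogy, hny]
  -- key bound: s - 1 ≤ L - L*s/(s+1)
  have key : s - 1 ≤ L - L * s / (s + 1) := by
    have h : L - L * s / (s + 1) = L / (s + 1) := by field_simp; ring
    rw [h, le_div_iff₀ (by linarith : (0:ℝ) < s + 1)]
    nlinarith [hsq]
  have hlog1 : 0 < Real.log (1 + 1 / s) := Real.log_pos h1s
  set t := Real.sqrt s with htdef
  have ht : t ^ 2 = s := Real.sq_sqrt hs0.le
  have ht0 : 0 < t := Real.sqrt_pos.2 hs0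
  have hlogL : Real.log L ≤ 4 * (t - 1) := by
    have h1 : Real.log L = 2 * Real.log s := by
      rw [← hsq, Real.log_pow]; push_cast; ring
    have h2 : Real.log s = 2 * Real.log t := by
      rw [htdef, Real.log_sqrt hs0.le]; ring
    have h3 : Real.log t ≤ t - 1 := Real.log_le_sub_one_of_pos ht0
    rw [h1, h2]; linarith
  nlinarith [sq_nonneg (t - 2), key, hlog1, hlogL, ht]
end

section
/- For every real number n ≥ 5000, (1 + (n/log n)·(1 + 1/√(log n)))^{n − 3 − (n/log n)·(1 + 1/√(log n))} > (1 + (n/log n)·(1 + 1.1/√(log n)))^{n − 1 − (n/log n)·(1 + 1.1/√(log n))}. -/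
/-!
Write `L = log n`, `s = √L`, `A = (n / L)(1 + 1/s)`, `B = (n / L)(1 + 1.1/s)`, so that
`D = B - A = n / (10 L s)` is the gap between the exponents, shifted by 2. Taking logarithms and
using `log (1 + B) - log (1 + A) ≤ D / (1 + A)`, it suffices that
`(n - 1 - B) D / (1 + A) < (D - 2) log (1 + A)`. Since `(n - B) / A = (s³ - s - 1.1) / (s + 1)` and
`log (1 + A) ≥ L - log L`, this becomes a polynomial inequality in `s`, `D` and `log L`, which holds
because `n = e^L ≥ 7 L³` (so `D ≥ 0.7 s³`) and `log L ≤ (2 / e) s < 0.736 s` once `L ≥ 8.5`.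
-/

open Real

lemma log_sub_log_le_div {x y : ℝ} (hx : 0 < x) (hy : 0 < y) : log y - log x ≤ (y - x) / x := by
  have h := log_le_sub_one_of_pos (div_pos hy hx)
  rwa [log_div hy.ne' hx.ne', div_sub_one hx.ne'] at h

lemma rpow_lt_rpow_of_mul_div_lt {a b m k : ℝ} (ha : 0 < a) (hb : 0 < b) (hm : 0 ≤ m)
    (h : m * ((b - a) / a) < (k - m) * log a) : b ^ m < a ^ k := by
  rw [rpow_def_of_pos hb, rpow_def_of_pos ha, exp_lt_exp]
  nlinarith [mul_le_mul_of_nonneg_left (log_sub_log_le_div ha hb) hm]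

lemma exp_eight_point_five_sq : exp 8.5 ^ 2 = exp 1 ^ 17 := by
  rw [← exp_nat_mul, ← exp_nat_mul]; norm_num

lemma exp_eight_point_five_lt : exp 8.5 < 5000 := by
  rw [← pow_lt_pow_iff_left₀ (exp_pos _).le (by norm_num) two_ne_zero, exp_eight_point_five_sq]
  calc exp 1 ^ 17 < 2.7182818286 ^ 17 := by gcongr; exact exp_one_lt_d9
    _ < 5000 ^ 2 := by norm_num

lemma lt_exp_eight_point_five : 4898 < exp 8.5 := by
  rw [← pow_lt_pow_iff_left₀ (by norm_num) (exp_pos _).le two_ne_zero, exp_eight_point_five_sq]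
  calc (4898 : ℝ) ^ 2 < 2.7182818283 ^ 17 := by norm_num
    _ < exp 1 ^ 17 := by gcongr; exact exp_one_gt_d9

lemma seven_mul_pow_three_le_exp {x : ℝ} (hx : 8.5 ≤ x) : 7 * x ^ 3 ≤ exp x := by
  have hcube : (1 + (x - 8.5) / 3) ^ 3 ≤ exp (x - 8.5) := by
    calc (1 + (x - 8.5) / 3) ^ 3 ≤ exp ((x - 8.5) / 3) ^ 3 := by
          gcongr
          linarith [add_one_le_exp ((x - 8.5) / 3)]
      _ = exp (x - 8.5) := by rw [← exp_nat_mul]; ring_nf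
  have hsplit : exp x = exp 8.5 * exp (x - 8.5) := by rw [← exp_add]; ring_nf
  have h : 4898 * (1 + (x - 8.5) / 3) ^ 3 ≤ exp x := by
    rw [hsplit]
    exact mul_le_mul lt_exp_eight_point_five.le hcube (by positivity) (exp_pos _).le
  nlinarith [mul_nonneg (mul_nonneg (sub_nonneg.2 hx) (sub_nonneg.2 hx)) (sub_nonneg.2 hx),
    sq_nonneg (x - 8.5)]

lemma log_le_div_exp_one {x : ℝ} (hx : 0 < x) : log x ≤ x / exp 1 := by
  have h := log_le_sub_one_of_pos (div_pos hx (exp_pos 1))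
  rw [log_div hx.ne' (exp_pos 1).ne', log_exp] at h
  linarith

/-- `log x = 2 log √x ≤ 2 √x / e`, and `2 / e < 0.736`. -/
lemma log_le_mul_sqrt {x : ℝ} (hx : 0 < x) : log x ≤ 0.736 * √x := by
  have hs : 0 < √x := sqrt_pos.2 hx
  have hlog : log x = 2 * log √x := by
    rw [← log_rpow hs, rpow_two, sq_sqrt hx.le]
  have he : √x / exp 1 ≤ √x / 2.7182818283 :=
    div_le_div_of_nonneg_left hs.le (by norm_num) exp_one_gt_d9.le
  have hnum : √x / 2.7182818283 ≤ 0.368 * √x := by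
    rw [div_le_iff₀ (by norm_num)]; nlinarith
  linarith [log_le_div_exp_one hs]

lemma mul_div_le_sub_two_mul {s D E : ℝ} (hs : 2.9 ≤ s) (hD : 0.7 * s ^ 3 ≤ D)
    (hE : E ≤ 0.736 * s) : D * ((s ^ 3 - s - 1.1) / (s + 1)) ≤ (D - 2) * (s ^ 2 - E) := by
  have hs3 : 24 ≤ s ^ 3 := by nlinarith [mul_le_mul hs hs (by norm_num) (by linarith)]
  have hD2 : 0 ≤ D - 2 := by linarith
  rw [mul_div_assoc', div_le_iff₀ (by linarith)]
  nlinarith [mul_le_mul_of_nonneg_left hE (mul_nonneg hD2 (by linarith : (0:ℝ) ≤ s + 1)),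
    mul_le_mul_of_nonneg_right hD (by nlinarith : (0:ℝ) ≤ 0.264 * s ^ 2 + 0.264 * s + 1.1)]

lemma div_sq_mul_one_add_le_half {n s : ℝ} (hn : 0 ≤ n) (hs : 2.9 ≤ s) :
    n / s ^ 2 * (1 + 1.1 / s) ≤ n / 2 := by
  calc n / s ^ 2 * (1 + 1.1 / s) ≤ n / 2.9 ^ 2 * (1 + 1.1 / 2.9) := by gcongr
    _ ≤ n / 2 := by norm_num; linarith

lemma mul_div_one_add_lt_sub_two_mul_log {n s A B : ℝ} (hs : 2.9 ≤ s) (hlog : log n = s ^ 2)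
    (hn : 7 * s ^ 6 ≤ n) (hlogs : log (s ^ 2) ≤ 0.736 * s)
    (hA : A = n / s ^ 2 * (1 + 1 / s)) (hB : B = n / s ^ 2 * (1 + 1.1 / s)) :
    (n - 1 - B) * ((B - A) / (1 + A)) < (B - A - 2) * log (1 + A) := by
  have hs0 : 0 < s := by linarith
  have hn0 : 0 < n := lt_of_lt_of_le (by positivity) hn
  have hA0 : 0 < A := by rw [hA]; positivity
  have hD : B - A = n / (10 * s ^ 3) := by rw [hA, hB]; field_simp; ring
  have hs3 : 24 ≤ s ^ 3 := by nlinarith [mul_le_mul hs hs (by norm_num) (by linarith)]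
  have hD0 : 0 < B - A := by rw [hD]; positivity
  have hD_ge : 0.7 * s ^ 3 ≤ B - A := by
    rw [hD, le_div_iff₀ (by positivity)]; nlinarith
  have hB_le : B ≤ n / 2 := hB ▸ div_sq_mul_one_add_le_half hn0.le hs
  have hratio : (n - B) / A = (s ^ 3 - s - 1.1) / (s + 1) := by
    rw [hA, hB]; field_simp; ring
  have hlogA : s ^ 2 - log (s ^ 2) ≤ log (1 + A) := by
    calc s ^ 2 - log (s ^ 2) = log (n / s ^ 2) := by rw [log_div hn0.ne' (by positivity), hlog]
      _ ≤ log (1 + A) := by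
        refine log_le_log (by positivity) ?_
        rw [hA]
        nlinarith [div_pos hn0 (pow_pos hs0 2), div_pos one_pos hs0]
  calc (n - 1 - B) * ((B - A) / (1 + A)) < (B - A) * ((n - B) / A) := by
        rw [mul_div_assoc', mul_div_assoc', div_lt_div_iff₀ (by linarith) hA0]
        nlinarith [mul_pos hD0 hA0, mul_pos hD0 (by linarith : 0 < n - B)]
    _ = (B - A) * ((s ^ 3 - s - 1.1) / (s + 1)) := by rw [hratio]
    _ ≤ (B - A - 2) * (s ^ 2 - log (s ^ 2)) := mul_div_le_sub_two_mul hs hD_ge hlogs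
    _ ≤ (B - A - 2) * log (1 + A) := by gcongr; linarith

/-- For every real `n ≥ 5000`,
`(1 + (n/log n)(1 + 1/√(log n)))^{n − 3 − (n/log n)(1 + 1/√(log n))}
  > (1 + (n/log n)(1 + 1.1/√(log n)))^{n − 1 − (n/log n)(1 + 1.1/√(log n))}`. -/
theorem k_lower_bound_ineq (n : ℝ) (hn : 5000 ≤ n) :
    (1 + n / Real.log n * (1 + 1.1 / Real.sqrt (Real.log n))) ^
        (n - 1 - n / Real.log n * (1 + 1.1 / Real.sqrt (Real.log n))) <
      (1 + n / Real.log n * (1 + 1 / Real.sqrt (Real.log n))) ^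
        (n - 3 - n / Real.log n * (1 + 1 / Real.sqrt (Real.log n))) := by
  have hn0 : 0 < n := by linarith
  have hL : 8.5 ≤ log n := by
    rw [le_log_iff_exp_le hn0]; linarith [exp_eight_point_five_lt]
  obtain ⟨s, hs_def⟩ : ∃ s, √(log n) = s := ⟨_, rfl⟩
  have hlog : log n = s ^ 2 := by rw [← hs_def, sq_sqrt (by linarith)]
  have hs : 2.9 ≤ s := by rw [← hs_def, le_sqrt (by norm_num) (by linarith)]; linarith
  have hcube : 7 * s ^ 6 ≤ n := by
    have h := seven_mul_pow_three_le_exp hL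
    rwa [exp_log hn0, hlog, ← pow_mul] at h
  have hlogs : log (s ^ 2) ≤ 0.736 * s := by
    rw [← hlog, ← hs_def]; exact log_le_mul_sqrt (by linarith)
  rw [hs_def, hlog]
  have hm : 0 ≤ n - 1 - n / s ^ 2 * (1 + 1.1 / s) := by
    linarith [div_sq_mul_one_add_le_half hn0.le hs]
  refine rpow_lt_rpow_of_mul_div_lt (by positivity) (by positivity) hm ?_
  convert mul_div_one_add_lt_sub_two_mul_log hs hlog hcube hlogs rfl rfl using 2 <;> ring
end

section
/- For every real number n ≥ 5000, (1 + (n/log n)·(1 − 1/log n))^{n − 1 − (n/log n)·(1 − 1/log n)} < ((n/log n)·(1 + 1/log n) − 2)^{n − (n/log n)·(1 + 1/log n)}. -/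
/-!
Write `L = log n`, `A` and `B` for the two bases and `p`, `q` for the two exponents. Then
`p = q + (B - A) + 2`, and it suffices to compare logarithms. Since `log B - log A ≥ 1 - A / B`
and `q ≥ (L - 2) B`, passing from base `A` to base `B` gains at least `(L - 2)(B - A)` in
`q · log`, while the extra exponent costs `(B - A + 2) log A ≤ (B - A + 2)(L - log L)` because
`A ≤ n / L`. As `B - A = 2n/L² - 3` and `log L ≥ 2.13`, the gain wins as soon as
`0.13 (B - A) > 2L - 4.26`, which follows from `n = exp L ≥ 7.7 L³` for `L ≥ 8.5`.
-/

open Real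

lemma exp_eight_point_five_bounds : (4800 : ℝ) < exp 8.5 ∧ exp 8.5 < 5000 := by
  have hsq : exp 8.5 ^ 2 = exp 1 ^ 17 := by rw [← exp_nat_mul, ← exp_nat_mul]; norm_num
  have hlo : (4800 : ℝ) ^ 2 < exp 8.5 ^ 2 := by
    rw [hsq]
    calc (4800 : ℝ) ^ 2 < 2.7182818283 ^ 17 := by norm_num
      _ < exp 1 ^ 17 := by gcongr; exact exp_one_gt_d9
  have hhi : exp 8.5 ^ 2 < 5000 ^ 2 := by
    rw [hsq]
    calc exp 1 ^ 17 < 2.7182818286 ^ 17 := by gcongr; exact exp_one_lt_d9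
      _ < 5000 ^ 2 := by norm_num
  exact ⟨lt_of_pow_lt_pow_left₀ 2 (exp_pos _).le hlo, lt_of_pow_lt_pow_left₀ 2 (by norm_num) hhi⟩

lemma exp_two_point_one_three_lt : exp 2.13 < 8.5 := by
  have h013 : exp 0.13 < 1 / (1 - 0.13) :=
    exp_bound_div_one_sub_of_interval' (by norm_num) (by norm_num)
  have he : exp 1 < 2.7182818286 := exp_one_lt_d9
  calc exp 2.13 = exp 1 * exp 1 * exp 0.13 := by rw [← exp_add, ← exp_add]; norm_num
    _ < 2.7182818286 * 2.7182818286 * (1 / (1 - 0.13)) := by gcongr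
    _ < 8.5 := by norm_num

lemma one_add_div_pow_le_exp {y : ℝ} {k : ℕ} (hy : -k ≤ y) : (1 + y / k) ^ k ≤ exp y := by
  simpa [sub_eq_add_neg, neg_div] using one_sub_div_pow_le_exp_neg (t := -y) (by linarith)

lemma mul_pow_three_le_exp {x : ℝ} (hx : 8.5 ≤ x) : 7.7 * x ^ 3 ≤ exp x := by
  have hcube : (1 + (x - 8.5) / 3) ^ 3 ≤ exp (x - 8.5) := by
    exact_mod_cast one_add_div_pow_le_exp (k := 3) (by push_cast; linarith)
  calc 7.7 * x ^ 3 ≤ 4800 * (1 + (x - 8.5) / 3) ^ 3 := by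
        nlinarith [sq_nonneg (x - 8.5), mul_nonneg (sub_nonneg.2 hx) (sq_nonneg (x - 8.5))]
    _ ≤ exp 8.5 * exp (x - 8.5) := by
        gcongr
        exact exp_eight_point_five_bounds.1.le
    _ = exp x := by rw [← exp_add]; ring_nf

lemma rpow_lt_rpow_of_log_bound {A B q c : ℝ} (hA : 0 < A) (hAB : A ≤ B) (hc : 0 ≤ c)
    (hq : c * B ≤ q) (hlogA : (B - A + 2) * log A < c * (B - A)) :
    A ^ (q + (B - A) + 2) < B ^ q := by
  have hB : 0 < B := hA.trans_le hAB
  have hgain : c * (B - A) ≤ q * (log B - log A) := calc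
    c * (B - A) ≤ q / B * (B - A) := by gcongr; rwa [le_div_iff₀ hB]
    _ = q * (1 - (B / A)⁻¹) := by field_simp
    _ ≤ q * (log B - log A) := by
        rw [← log_div hB.ne' hA.ne']
        gcongr
        · exact (mul_nonneg hc hB.le).trans hq
        · exact one_sub_inv_le_log_of_pos (div_pos hB hA)
  rw [rpow_def_of_pos hA, rpow_def_of_pos hB, exp_lt_exp]
  nlinarith

section

variable {n L : ℝ}

lemma sub_one_sub_div_mul_one_sub_eq :
    n - 1 - n / L * (1 - 1 / L) = (n - n / L * (1 + 1 / L)) +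
      ((n / L * (1 + 1 / L) - 2) - (1 + n / L * (1 - 1 / L))) + 2 := by
  ring

lemma div_mul_one_add_sub_sub_one_add_div_mul_one_sub (hL : L ≠ 0) :
    (n / L * (1 + 1 / L) - 2) - (1 + n / L * (1 - 1 / L)) = 2 * n / L ^ 2 - 3 := by
  field_simp
  ring

lemma sub_two_mul_le_sub_div_mul_one_add (hn : 0 ≤ n) (hL : 2 ≤ L) :
    (L - 2) * (n / L * (1 + 1 / L) - 2) ≤ n - n / L * (1 + 1 / L) := by
  have hL0 : L ≠ 0 := by positivity
  have key : n - n / L * (1 + 1 / L) - (L - 2) * (n / L * (1 + 1 / L) - 2) =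
      n / L ^ 2 + 2 * L - 4 := by
    field_simp
    ring
  have : 0 ≤ n / L ^ 2 := by positivity
  linarith

lemma zero_lt_one_add_div_mul_one_sub (hn : 0 ≤ n) (hL : 1 ≤ L) :
    0 < 1 + n / L * (1 - 1 / L) := by
  have : 0 ≤ 1 - 1 / L := by rw [sub_nonneg, div_le_one] <;> linarith
  have : 0 ≤ n / L * (1 - 1 / L) := by positivity
  linarith

lemma log_one_add_div_mul_one_sub_le (hL : 1 ≤ L) (hn : L ^ 2 ≤ n) :
    log (1 + n / L * (1 - 1 / L)) ≤ log n - log L := by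
  have hL0 : 0 < L := by linarith
  have hn0 : 0 < n := by nlinarith
  have key : n / L - (1 + n / L * (1 - 1 / L)) = n / L ^ 2 - 1 := by
    field_simp
    ring
  have : 1 ≤ n / L ^ 2 := by rwa [le_div_iff₀ (by positivity), one_mul]
  rw [← log_div hn0.ne' hL0.ne']
  exact log_le_log (zero_lt_one_add_div_mul_one_sub hn0.le hL) (by linarith)

lemma two_mul_div_sq_sub_three_add_two_mul_lt (hL : 0 < L) (hn : 7.7 * L ^ 3 ≤ n) :
    (2 * n / L ^ 2 - 3 + 2) * (L - 2.13) < (L - 2) * (2 * n / L ^ 2 - 3) := by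
  have hX : 15.4 * L ≤ 2 * n / L ^ 2 := by
    rw [le_div_iff₀ (by positivity)]
    linarith
  linarith

end

/-- For every real `n ≥ 5000`,
`(1 + (n/log n)(1 − 1/log n))^{n − 1 − (n/log n)(1 − 1/log n)}
  < ((n/log n)(1 + 1/log n) − 2)^{n − (n/log n)(1 + 1/log n)}`. -/
theorem k_upper_bound_ineq (n : ℝ) (hn : 5000 ≤ n) :
    (1 + n / Real.log n * (1 - 1 / Real.log n)) ^
        (n - 1 - n / Real.log n * (1 - 1 / Real.log n)) <
      (n / Real.log n * (1 + 1 / Real.log n) - 2) ^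
        (n - n / Real.log n * (1 + 1 / Real.log n)) := by
  have hn0 : 0 < n := by linarith
  have hL : 8.5 < log n := (lt_log_iff_exp_lt hn0).2 (exp_eight_point_five_bounds.2.trans_le hn)
  have hcube : 7.7 * log n ^ 3 ≤ n := by
    simpa [exp_log hn0] using mul_pow_three_le_exp hL.le
  have hlogL : 2.13 ≤ log (log n) :=
    (le_log_iff_exp_le (by linarith)).2 (by linarith [exp_two_point_one_three_lt])
  set L := log n
  have hLn : L ^ 2 ≤ n := by nlinarith
  have hBA := div_mul_one_add_sub_sub_one_add_div_mul_one_sub (n := n) (by positivity : L ≠ 0)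
  have hlogA : log (1 + n / L * (1 - 1 / L)) ≤ L - 2.13 :=
    (log_one_add_div_mul_one_sub_le (by linarith) hLn).trans (by linarith)
  have hX : 3 ≤ 2 * n / L ^ 2 := by
    rw [le_div_iff₀ (by positivity)]
    nlinarith
  rw [sub_one_sub_div_mul_one_sub_eq]
  refine rpow_lt_rpow_of_log_bound (zero_lt_one_add_div_mul_one_sub hn0.le (by linarith)) ?_
    (by linarith) (sub_two_mul_le_sub_div_mul_one_add hn0.le (by linarith)) ?_
  · linarith
  · rw [hBA]
    calc (2 * n / L ^ 2 - 3 + 2) * log (1 + n / L * (1 - 1 / L))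
        ≤ (2 * n / L ^ 2 - 3 + 2) * (L - 2.13) := by gcongr
      _ < (L - 2) * (2 * n / L ^ 2 - 3) := two_mul_div_sq_sub_three_add_two_mul_lt (by linarith) hcube
end

section
/- In the extremal setup with n ≥ 5000, the spectral radius satisfies λ₁(G*) < n − k + 3/5, where k − 1 is the shortest distance between a vertex of minimum principal-eigenvector entry and a vertex of maximum entry. -/
open Classical Matrix

/-!
Suppose `λ ≥ n - k + 3/5` and write the path as `v₁, …, v_k`. Being a shortest path from a minimum
to a maximum entry, it has `v_k` adjacent to none of `v₁, …, v_{k-2}` and `x(v_{k-1}) < 1`, so the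
eigenvalue equation at `v_k` gives `λ ≤ n - k + x(v_{k-1})`, whence `x(v_{k-1}) ≥ 3/5`.
Along the path the eigenvalue equations give `x(v_{i+2}) ≤ Sᵢ x(v_{i+1})` for the continued
fractions `S₀ = λ`, `S_{i+1} = λ - 1/Sᵢ`, so `3/5 ≤ F_λ(k-2) x(v₁)` with `F_μ(N) = S₀ ⋯ S_{N-1}`.
On the kite `P_r · K_{n-r+1}` the same equations hold with the inequalities reversed and
`λ ≥ n - r`, so its principal ratio is at least `F_{n-r}(r-1)`, and extremality of `G` gives
`F_{n-r}(r-1) x(v₁) ≤ 1`. This fails for the kite with `r = n - 5` when `n - k ≤ 1`, with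
`r = k - 1` when `8k ≥ 5n + 12`, and with `r = k` otherwise (then `n - k > 1873`, while raising
`μ` by one multiplies `F_μ(k-2)` by less than `55`).
-/

open Finset

section Perron

variable {N : ℕ} {H : SimpleGraph (Fin N)}

lemma adjMat_nonneg (u v : Fin N) : 0 ≤ adjMat H u v := by
  simp only [adjMat, of_apply]
  split_ifs <;> norm_num

lemma adjMat_mulVec_apply (y : Fin N → ℝ) (u : Fin N) :
    (adjMat H *ᵥ y) u = ∑ v ∈ H.neighborFinset u, y v :=
  H.adjMatrix_mulVec_apply u y

lemma isSelfAdjoint_toEuclideanCLM_adjMat :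
    IsSelfAdjoint (toEuclideanCLM (𝕜 := ℝ) (adjMat H)) :=
  (isHermitian_iff_isSymm.2 (H.isSymm_adjMatrix (α := ℝ))).isSelfAdjoint.map
    (toEuclideanCLM (n := Fin N) (𝕜 := ℝ))

lemma reApplyInnerSelf_toEuclideanCLM_adjMat (y : EuclideanSpace ℝ (Fin N)) :
    (toEuclideanCLM (𝕜 := ℝ) (adjMat H)).reApplyInnerSelf y = y ⬝ᵥ adjMat H *ᵥ y := by
  rw [ContinuousLinearMap.reApplyInnerSelf_apply, RCLike.re_to_real, real_inner_comm,
    inner_toEuclideanCLM]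

lemma dotProduct_adjMat_mulVec_le_abs (y : Fin N → ℝ) :
    y ⬝ᵥ adjMat H *ᵥ y ≤ (fun u => |y u|) ⬝ᵥ adjMat H *ᵥ fun u => |y u| := by
  simp only [dotProduct, mulVec, mul_sum]
  refine sum_le_sum fun u _ => sum_le_sum fun v _ => ?_
  calc y u * (adjMat H u v * y v) ≤ |y u * (adjMat H u v * y v)| := le_abs_self _
    _ = |y u| * (adjMat H u v * |y v|) := by
      rw [abs_mul, abs_mul, abs_of_nonneg (adjMat_nonneg u v)]

/-- A maximizer of the Rayleigh quotient on the unit sphere can be taken nonnegative, since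
taking entrywise absolute values does not decrease the quotient. -/
lemma exists_nonneg_eigenvector [Nonempty (Fin N)] :
    ∃ μ : ℝ, ∃ w : Fin N → ℝ, 0 ≤ w ∧ w ≠ 0 ∧ adjMat H *ᵥ w = μ • w := by
  set T := toEuclideanCLM (𝕜 := ℝ) (adjMat H)
  obtain ⟨y, hy, hmax⟩ := (isCompact_sphere (0 : EuclideanSpace ℝ (Fin N)) 1).exists_isMaxOn
    (NormedSpace.sphere_nonempty.2 zero_le_one) T.reApplyInnerSelf_continuous.continuousOn
  set w : EuclideanSpace ℝ (Fin N) := WithLp.toLp 2 fun u => |y u|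
  have hw : ‖w‖ = 1 := by
    rw [← mem_sphere_zero_iff_norm.1 hy, EuclideanSpace.norm_eq, EuclideanSpace.norm_eq]
    simp [w]
  have hw0 : w ≠ 0 := by rintro h; simp [h] at hw
  have hwmax : IsMaxOn T.reApplyInnerSelf (Metric.sphere 0 ‖w‖) w := by
    intro z hz
    refine (isMaxOn_iff.1 hmax z (hw ▸ hz)).trans ?_
    simp only [T, reApplyInnerSelf_toEuclideanCLM_adjMat]
    exact dotProduct_adjMat_mulVec_le_abs _
  obtain ⟨hmem, -⟩ := isSelfAdjoint_toEuclideanCLM_adjMat.hasEigenvector_of_isMaxOn hw0 hwmax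
  have hw0' : WithLp.ofLp w ≠ 0 := fun h => hw0 (by simpa using congrArg (WithLp.toLp 2) h)
  exact ⟨_, WithLp.ofLp w, fun u => abs_nonneg _, hw0',
    congrArg WithLp.ofLp (Module.End.mem_eigenspace_iff.1 hmem)⟩

lemma pos_of_nonneg_of_mulVec_eq_smul (hH : H.Connected) {μ : ℝ} {w : Fin N → ℝ}
    (hw : 0 ≤ w) (hw0 : w ≠ 0) (heig : adjMat H *ᵥ w = μ • w) (u : Fin N) : 0 < w u := by
  have hzero : ∀ a b, H.Adj a b → w a = 0 → w b = 0 := by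
    intro a b hab ha
    have hsum : ∑ c ∈ H.neighborFinset a, w c = 0 := by
      rw [← adjMat_mulVec_apply, heig, Pi.smul_apply, ha, smul_zero]
    exact (sum_eq_zero_iff_of_nonneg fun c _ => hw c).1 hsum b
      ((H.mem_neighborFinset a b).2 hab)
  have hwalk : ∀ a b, H.Walk a b → w a = 0 → w b = 0 := by
    intro a b p
    induction p with
    | nil => exact id
    | cons hab _ ih => exact fun ha => ih (hzero _ _ hab ha)
  refine (hw u).lt_of_ne fun hu => hw0 (funext fun b => ?_)
  exact hwalk u b (hH.preconnected u b).some hu.symm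

theorem exists_isPrincipalEigenpair (hH : H.Connected) : ∃ lam y, IsPrincipalEigenpair H lam y := by
  have := hH.nonempty
  obtain ⟨μ, w, hw, hw0, heig⟩ := exists_nonneg_eigenvector (H := H)
  exact ⟨μ, w, pos_of_nonneg_of_mulVec_eq_smul hH hw hw0 heig, heig⟩

end Perron

lemma div_le_pRatio {n : ℕ} {x : Fin n → ℝ} (hx : ∀ v, 0 < x v) (a b : Fin n) :
    x a / x b ≤ pRatio x := by
  have : Nonempty (Fin n) := ⟨a⟩
  obtain ⟨c, hc⟩ := Finite.exists_min x
  exact div_le_div₀ ((hx a).le.trans (le_ciSup (Set.finite_range x).bddAbove a))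
    (le_ciSup (Set.finite_range x).bddAbove a) ((hx c).trans_le (le_ciInf hc))
    (ciInf_le (Set.finite_range x).bddBelow b)

lemma pRatio_eq_div_s15 {n : ℕ} {x : Fin n → ℝ} {a b : Fin n} (ha : ∀ v, x v ≤ x a)
    (hb : ∀ v, x b ≤ x v) : pRatio x = x a / x b := by
  have : Nonempty (Fin n) := ⟨a⟩
  rw [pRatio, le_antisymm (ciSup_le ha) (le_ciSup (Set.finite_range x).bddAbove a),
    le_antisymm (ciInf_le (Set.finite_range x).bddBelow b) (le_ciInf hb)]

namespace IsPrincipalEigenpair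

variable {n : ℕ} {G : SimpleGraph (Fin n)} {lam : ℝ} {x : Fin n → ℝ}

lemma mul_apply_eq_sum (hpe : IsPrincipalEigenpair G lam x) (u : Fin n) :
    lam * x u = ∑ v ∈ G.neighborFinset u, x v := by
  rw [← adjMat_mulVec_apply, hpe.2]; rfl

lemma sum_le_mul_apply (hpe : IsPrincipalEigenpair G lam x) {u : Fin n} {s : Finset (Fin n)}
    (hs : ∀ v ∈ s, G.Adj u v) : ∑ v ∈ s, x v ≤ lam * x u := by
  rw [hpe.mul_apply_eq_sum]
  exact sum_le_sum_of_subset_of_nonneg (fun v hv => (G.mem_neighborFinset u v).2 (hs v hv))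
    fun v _ _ => (hpe.1 v).le

lemma mul_apply_le_sum (hpe : IsPrincipalEigenpair G lam x) {u : Fin n} {s : Finset (Fin n)}
    (hs : ∀ v, G.Adj u v → v ∈ s) : lam * x u ≤ ∑ v ∈ s, x v := by
  rw [hpe.mul_apply_eq_sum]
  exact sum_le_sum_of_subset_of_nonneg (fun v hv => hs v ((G.mem_neighborFinset u v).1 hv))
    fun v _ _ => (hpe.1 v).le

lemma card_sub_one_le (hpe : IsPrincipalEigenpair G lam x) {C : Finset (Fin n)}
    (hC : G.IsClique (C : Set (Fin n))) (hne : C.Nonempty) : (#C : ℝ) - 1 ≤ lam := by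
  obtain ⟨u, hu, hmin⟩ := C.exists_min_image x hne
  have h : (#(C.erase u) : ℝ) * x u ≤ lam * x u := by
    refine le_trans ?_ (hpe.sum_le_mul_apply fun v hv =>
      hC hu (mem_of_mem_erase hv) (ne_of_mem_erase hv).symm)
    simpa using card_nsmul_le_sum _ _ _ fun v hv => hmin v (mem_of_mem_erase hv)
  rw [cast_card_erase_of_mem hu] at h
  exact le_of_mul_le_mul_right h (hpe.1 u)

lemma le_sub_card_add (hpe : IsPrincipalEigenpair G lam x) (hx1 : ∀ v, x v ≤ 1) {u : Fin n}
    (hu : x u = 1) {B : Finset (Fin n)} (hB : ∀ v ∈ B, ¬ G.Adj u v) {w : Fin n} (hw : w ∉ B) :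
    lam ≤ n - #B - 1 + x w :=
  calc lam = lam * x u := by rw [hu, mul_one]
    _ ≤ ∑ v ∈ Bᶜ, x v := hpe.mul_apply_le_sum fun v h => mem_compl.2 fun hv => hB v hv h
    _ = x w + ∑ v ∈ Bᶜ.erase w, x v := (add_sum_erase _ _ (mem_compl.2 hw)).symm
    _ ≤ x w + #(Bᶜ.erase w) := by
        gcongr; simpa using sum_le_card_nsmul _ _ _ fun v _ => hx1 v
    _ = n - #B - 1 + x w := by
        rw [cast_card_erase_of_mem (mem_compl.2 hw), card_compl, Fintype.card_fin,
          Nat.cast_sub (by simpa using card_le_univ B)]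
        ring

end IsPrincipalEigenpair

/-- If `μ y₀ = y₁` and `μ yᵢ₊₁ = yᵢ + yᵢ₊₂` (the eigenvalue equations along a pendant path read
from its free end), then `yᵢ₊₁ = pendantRatio μ i * yᵢ`. -/
noncomputable def pendantRatio (μ : ℝ) : ℕ → ℝ
  | 0 => μ
  | i + 1 => μ - (pendantRatio μ i)⁻¹

noncomputable def pendantGrowth (μ : ℝ) (N : ℕ) : ℝ := ∏ i ∈ range N, pendantRatio μ i

section Pendant

variable {μ μ' : ℝ}

lemma sub_one_le_pendantRatio (hμ : 2 ≤ μ) (i : ℕ) : μ - 1 ≤ pendantRatio μ i := by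
  induction i with
  | zero => simp only [pendantRatio]; linarith
  | succ i ih =>
    have : (pendantRatio μ i)⁻¹ ≤ 1 := inv_le_one_of_one_le₀ (by linarith)
    simp only [pendantRatio]; linarith

lemma pendantRatio_pos (hμ : 2 ≤ μ) (i : ℕ) : 0 < pendantRatio μ i := by
  linarith [sub_one_le_pendantRatio hμ i]

lemma pendantRatio_le (hμ : 2 ≤ μ) (i : ℕ) : pendantRatio μ i ≤ μ := by
  cases i with
  | zero => rfl
  | succ i =>
    have := inv_pos.2 (pendantRatio_pos hμ i)
    simp only [pendantRatio]; linarith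

lemma pendantRatio_add_sub_le (hμ : 2 ≤ μ) (hμμ' : μ ≤ μ') (i : ℕ) :
    pendantRatio μ i + (μ' - μ) ≤ pendantRatio μ' i := by
  induction i with
  | zero => simp only [pendantRatio]; linarith
  | succ i ih =>
    have : (pendantRatio μ' i)⁻¹ ≤ (pendantRatio μ i)⁻¹ :=
      inv_anti₀ (pendantRatio_pos hμ i) (by linarith)
    simp only [pendantRatio]; linarith

lemma pendantGrowth_succ (μ : ℝ) (N : ℕ) :
    pendantGrowth μ (N + 1) = pendantGrowth μ N * pendantRatio μ N :=
  prod_range_succ _ _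

lemma pendantGrowth_mul_pow (μ c : ℝ) (N : ℕ) :
    pendantGrowth μ N * c ^ N = ∏ i ∈ range N, pendantRatio μ i * c := by
  rw [pendantGrowth, ← prod_mul_pow_card, card_range]

lemma sub_one_pow_le_pendantGrowth (hμ : 2 ≤ μ) (N : ℕ) : (μ - 1) ^ N ≤ pendantGrowth μ N := by
  simpa [pendantGrowth] using prod_le_prod (s := range N) (fun _ _ => by linarith)
    fun i _ => sub_one_le_pendantRatio hμ i

lemma pendantGrowth_nonneg (hμ : 2 ≤ μ) (N : ℕ) : 0 ≤ pendantGrowth μ N :=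
  prod_nonneg fun i _ => (pendantRatio_pos hμ i).le

lemma pendantGrowth_mono (hμ : 2 ≤ μ) (hμμ' : μ ≤ μ') (N : ℕ) :
    pendantGrowth μ N ≤ pendantGrowth μ' N :=
  prod_le_prod (fun i _ => (pendantRatio_pos hμ i).le)
    fun i _ => by linarith [pendantRatio_add_sub_le hμ hμμ' i]

lemma pendantGrowth_mul_pow_le (hμ : 2 ≤ μ) (hμμ' : μ ≤ μ') (N : ℕ) :
    pendantGrowth μ N * (μ' / μ) ^ N ≤ pendantGrowth μ' N := by
  rw [pendantGrowth_mul_pow, pendantGrowth]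
  have hμ0 : 0 < μ := by linarith
  refine prod_le_prod (fun i _ => mul_nonneg (pendantRatio_pos hμ i).le
    (div_nonneg (by linarith) hμ0.le)) fun i _ => ?_
  have hS := pendantRatio_le hμ i
  have hS' := pendantRatio_add_sub_le hμ hμμ' i
  rw [mul_div_assoc', div_le_iff₀ (by linarith)]
  nlinarith

lemma pendantGrowth_le_mul_pow (hμ : 2 ≤ μ) (hμμ' : μ ≤ μ') (N : ℕ) :
    pendantGrowth μ' N ≤ pendantGrowth μ N * (μ' / (μ - 1)) ^ N := by
  rw [pendantGrowth_mul_pow, pendantGrowth]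
  refine prod_le_prod (fun i _ => (pendantRatio_pos (hμ.trans hμμ') i).le) fun i _ => ?_
  calc pendantRatio μ' i ≤ μ' := pendantRatio_le (hμ.trans hμμ') i
    _ = (μ - 1) * (μ' / (μ - 1)) := by field_simp [show μ - 1 ≠ 0 by linarith]
    _ ≤ pendantRatio μ i * (μ' / (μ - 1)) := by
      gcongr
      · exact div_nonneg (by linarith) (by linarith)
      · exact sub_one_le_pendantRatio hμ i

end Pendant

section Chain

variable {Y r : ℕ → ℝ} {m : ℕ}

lemma le_prod_mul_of_le_mul (hr : ∀ i < m, 0 ≤ r i) (h : ∀ i < m, Y (i + 1) ≤ r i * Y i) :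
    Y m ≤ (∏ i ∈ range m, r i) * Y 0 := by
  induction m with
  | zero => simp
  | succ m ih =>
    calc Y (m + 1) ≤ r m * Y m := h m m.lt_succ_self
      _ ≤ r m * ((∏ i ∈ range m, r i) * Y 0) :=
        mul_le_mul_of_nonneg_left (ih (fun i hi => hr i (by omega)) fun i hi => h i (by omega))
          (hr m m.lt_succ_self)
      _ = (∏ i ∈ range (m + 1), r i) * Y 0 := by rw [prod_range_succ]; ring

lemma prod_mul_le_of_mul_le (hr : ∀ i < m, 0 ≤ r i) (h : ∀ i < m, r i * Y i ≤ Y (i + 1)) :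
    (∏ i ∈ range m, r i) * Y 0 ≤ Y m := by
  induction m with
  | zero => simp
  | succ m ih =>
    calc (∏ i ∈ range (m + 1), r i) * Y 0 = r m * ((∏ i ∈ range m, r i) * Y 0) := by
          rw [prod_range_succ]; ring
      _ ≤ r m * Y m :=
        mul_le_mul_of_nonneg_left (ih (fun i hi => hr i (by omega)) fun i hi => h i (by omega))
          (hr m m.lt_succ_self)
      _ ≤ Y (m + 1) := h m m.lt_succ_self

variable {μ : ℝ}

lemma le_pow_mul (hμ : 0 ≤ μ) (hY : ∀ i, 0 ≤ Y i) (h0 : Y 1 ≤ μ * Y 0)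
    (hstep : ∀ i, i + 2 ≤ m → Y i + Y (i + 2) ≤ μ * Y (i + 1)) : Y m ≤ μ ^ m * Y 0 := by
  refine (le_prod_mul_of_le_mul (r := fun _ => μ) (fun _ _ => hμ) ?_).trans_eq
    (by rw [prod_const, card_range])
  rintro (_ | i) hi
  · exact h0
  · linarith [hstep i (by omega), hY i]

lemma le_pendantGrowth_mul (hμ : 2 ≤ μ) (h0 : Y 1 ≤ μ * Y 0)
    (hstep : ∀ i, i + 2 ≤ m → Y i + Y (i + 2) ≤ μ * Y (i + 1)) :
    Y m ≤ pendantGrowth μ m * Y 0 := by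
  refine le_prod_mul_of_le_mul (fun i _ => (pendantRatio_pos hμ i).le) fun i hi => ?_
  induction i with
  | zero => simpa [pendantRatio] using h0
  | succ i ih =>
    have hprev : (pendantRatio μ i)⁻¹ * Y (i + 1) ≤ Y i :=
      (inv_mul_le_iff₀ (pendantRatio_pos hμ i)).2 (ih (by omega))
    have := hstep i (by omega)
    show Y (i + 2) ≤ (μ - (pendantRatio μ i)⁻¹) * Y (i + 1)
    rw [sub_mul]; linarith

lemma pendantGrowth_mul_le (hμ : 2 ≤ μ) (h0 : μ * Y 0 ≤ Y 1)
    (hstep : ∀ i, i + 2 ≤ m → μ * Y (i + 1) ≤ Y i + Y (i + 2)) :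
    pendantGrowth μ m * Y 0 ≤ Y m := by
  refine prod_mul_le_of_mul_le (fun i _ => (pendantRatio_pos hμ i).le) fun i hi => ?_
  induction i with
  | zero => simpa [pendantRatio] using h0
  | succ i ih =>
    have hprev : Y i ≤ (pendantRatio μ i)⁻¹ * Y (i + 1) :=
      (le_inv_mul_iff₀ (pendantRatio_pos hμ i)).2 (ih (by omega))
    have := hstep i (by omega)
    show (μ - (pendantRatio μ i)⁻¹) * Y (i + 1) ≤ Y (i + 2)
    rw [sub_mul]; linarith

end Chain

section Estimates

variable {μ μ' b X₀ : ℝ} {N : ℕ}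

lemma pendantGrowth_lt_mul_pendantGrowth (hμ : 2 ≤ μ) (hb : 0 < b) (hb1 : b < 1)
    (hμ' : μ + (1 - b) ≤ μ') (hN : μ < b * N) : pendantGrowth μ N < b * pendantGrowth μ' N := by
  have hμ0 : 0 < μ := by linarith
  have hF : 0 < pendantGrowth μ N := prod_pos fun i _ => pendantRatio_pos hμ i
  have hbern : 1 + N * (μ' / μ - 1) ≤ (μ' / μ) ^ N :=
    one_add_mul_sub_le_pow (by have := div_nonneg (by linarith : 0 ≤ μ') hμ0.le; linarith) N
  have hgap : (1 - b) / μ ≤ μ' / μ - 1 := by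
    rw [div_sub_one hμ0.ne']; exact div_le_div_of_nonneg_right (by linarith) hμ0.le
  have hNμ : 1 < b * N / μ := (one_lt_div hμ0).2 hN
  have key : 1 < b * (μ' / μ) ^ N :=
    calc 1 = b + (1 - b) * 1 := by ring
      _ < b + (1 - b) * (b * N / μ) := by gcongr
      _ = b * (1 + N * ((1 - b) / μ)) := by ring
      _ ≤ b * (μ' / μ) ^ N := by gcongr; exact le_trans (by gcongr) hbern
  calc pendantGrowth μ N < pendantGrowth μ N * (b * (μ' / μ) ^ N) := lt_mul_of_one_lt_right hF key
    _ = b * (pendantGrowth μ N * (μ' / μ) ^ N) := by ring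
    _ ≤ b * pendantGrowth μ' N :=
      mul_le_mul_of_nonneg_left (pendantGrowth_mul_pow_le hμ (by linarith) N) hb.le

lemma pendantGrowth_add_one_le (hμ : 2 ≤ μ) (N : ℕ) :
    pendantGrowth (μ + 1) N ≤ pendantGrowth μ N * Real.exp (2 * N / (μ - 1)) := by
  refine (pendantGrowth_le_mul_pow hμ (by linarith) N).trans ?_
  gcongr
  · exact pendantGrowth_nonneg hμ N
  calc ((μ + 1) / (μ - 1)) ^ N ≤ Real.exp (2 / (μ - 1)) ^ N := by
        gcongr
        · exact div_nonneg (by linarith) (by linarith)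
        · have : (μ + 1) / (μ - 1) = 2 / (μ - 1) + 1 := by
            field_simp [show μ - 1 ≠ 0 by linarith]; ring
          exact this ▸ Real.add_one_le_exp _
    _ = Real.exp (2 * N / (μ - 1)) := by rw [← Real.exp_nat_mul]; ring_nf

lemma exp_four_lt : Real.exp 4 < 55 := by
  have h : Real.exp 4 = Real.exp 1 ^ 4 := by rw [← Real.exp_nat_mul]; norm_num
  rw [h]
  calc Real.exp 1 ^ 4 < 2.7182818286 ^ 4 := by
        gcongr; exact Real.exp_one_lt_d9
    _ < 55 := by norm_num

end Estimates

section Kite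

variable {n r : ℕ}

lemma kiteGraph_connected (hn : 0 < n) : (kiteGraph n r).Connected := by
  rw [SimpleGraph.connected_iff_exists_forall_reachable]
  refine ⟨⟨n - 1, by omega⟩, fun ⟨u, hu⟩ => ?_⟩
  suffices h : ∀ d u (hu : u + d = n - 1),
      (kiteGraph n r).Reachable ⟨n - 1, by omega⟩ ⟨u, by omega⟩ from h (n - 1 - u) u (by omega)
  intro d
  induction d with
  | zero => intro u hu; obtain rfl : u = n - 1 := hu; rfl
  | succ d ih =>
    intro u hu
    by_cases hru : r ≤ u + 1
    · refine SimpleGraph.Adj.reachable ⟨?_, Or.inr ⟨show r ≤ n - 1 + 1 by omega, hru⟩⟩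
      simp [Fin.ext_iff]; omega
    · refine (ih (u + 1) (by omega)).trans (SimpleGraph.Adj.reachable ⟨?_, Or.inl
        ⟨by simp; omega, by simp; omega, Or.inr rfl⟩⟩)
      simp [Fin.ext_iff]

lemma kiteGraph_adj_of_succ_lt {u v : Fin n} (hu : u.val + 1 < r)
    (h : (kiteGraph n r).Adj u v) : u.val + 1 = v.val ∨ v.val + 1 = u.val := by
  rcases h with ⟨-, ⟨-, -, h⟩ | ⟨h, -⟩⟩
  · exact h
  · omega

lemma kiteGraph_isClique (hr : 1 ≤ r) (hrn : r ≤ n) :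
    (kiteGraph n r).IsClique (Ici (⟨r - 1, by omega⟩ : Fin n) : Set (Fin n)) := by
  intro u hu v hv huv
  simp only [coe_Ici, Set.mem_Ici, Fin.le_def] at hu hv
  exact ⟨huv, Or.inr ⟨by omega, by omega⟩⟩

lemma pendantGrowth_le_pRatio_kite (hr : 2 ≤ r) (hrn : r + 2 ≤ n) {lam : ℝ} {y : Fin n → ℝ}
    (hpe : IsPrincipalEigenpair (kiteGraph n r) lam y) :
    pendantGrowth (n - r : ℕ) (r - 1) ≤ pRatio y := by
  have hlam : ((n - r : ℕ) : ℝ) ≤ lam := by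
    have := hpe.card_sub_one_le (kiteGraph_isClique (by omega) (by omega)) ⟨_, mem_Ici.2 le_rfl⟩
    rw [Fin.card_Ici, show n - (r - 1) = n - r + 1 by omega] at this
    push_cast at this; linarith
  have hlam2 : 2 ≤ lam := le_trans (by exact_mod_cast (by omega : 2 ≤ n - r)) hlam
  set Y : ℕ → ℝ := fun i => if h : i < n then y ⟨i, h⟩ else 0
  have hY : ∀ i (h : i < n), Y i = y ⟨i, h⟩ := fun i h => dif_pos h
  have hchain : pendantGrowth lam (r - 1) * Y 0 ≤ Y (r - 1) := by
    refine pendantGrowth_mul_le hlam2 ?_ fun i hi => ?_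
    · have h := hpe.mul_apply_le_sum (u := ⟨0, by omega⟩) (s := {⟨1, by omega⟩}) fun v hv => by
        have := kiteGraph_adj_of_succ_lt (show 0 + 1 < r by omega) hv
        simp only [mem_singleton, Fin.ext_iff] at this ⊢; omega
      rw [hY 0 (by omega), hY 1 (by omega)]
      simpa using h
    · have h := hpe.mul_apply_le_sum (u := ⟨i + 1, by omega⟩)
        (s := {⟨i, by omega⟩, ⟨i + 2, by omega⟩}) fun v hv => by
          have := kiteGraph_adj_of_succ_lt (show i + 1 + 1 < r by omega) hv
          simp only [mem_insert, mem_singleton, Fin.ext_iff] at this ⊢; omega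
      rw [hY i (by omega), hY (i + 1) (by omega), hY (i + 2) (by omega)]
      rwa [sum_pair (by simp [Fin.ext_iff])] at h
  calc pendantGrowth (n - r : ℕ) (r - 1) ≤ pendantGrowth lam (r - 1) :=
        pendantGrowth_mono (by exact_mod_cast (by omega : 2 ≤ n - r)) hlam _
    _ ≤ Y (r - 1) / Y 0 := by
        rw [le_div_iff₀ (by rw [hY 0 (by omega)]; exact hpe.1 _)]; exact hchain
    _ ≤ pRatio y := by rw [hY _ (by omega), hY 0 (by omega)]; exact div_le_pRatio hpe.1 _ _

end Kite

section Cases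

variable {lam μ μ' b X₀ : ℝ} {N : ℕ}

lemma one_lt_pendantGrowth_five_mul {n k : ℕ} (hn : 12 ≤ n) (hkn : k ≤ n) (hlam : 0 ≤ lam)
    (hlam2 : lam ≤ 2) (hX₀ : 0 ≤ X₀) (hb : 3 / 5 ≤ lam ^ (k - 2) * X₀) :
    1 < pendantGrowth 5 (n - 6) * X₀ := by
  have h2 : lam ^ (k - 2) ≤ 2 ^ (n - 2) :=
    (pow_le_pow_left₀ hlam hlam2 _).trans (pow_le_pow_right₀ (by norm_num) (by omega))
  have h4 : 4 * 2 ^ (n - 2) ≤ pendantGrowth 5 (n - 6) :=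
    calc (4 : ℝ) * 2 ^ (n - 2) ≤ 2 ^ (n - 10) * 2 ^ (n - 2) := by
          gcongr
          calc (4 : ℝ) = 2 ^ 2 := by norm_num
            _ ≤ 2 ^ (n - 10) := pow_le_pow_right₀ (by norm_num) (by omega)
      _ = (5 - 1) ^ (n - 6) := by
          rw [← pow_add, show (5 : ℝ) - 1 = 2 ^ 2 by norm_num, ← pow_mul]
          congr 1; omega
      _ ≤ pendantGrowth 5 (n - 6) := sub_one_pow_le_pendantGrowth (by norm_num) _
  nlinarith

lemma one_lt_pendantGrowth_mul_of_lt (hμ : 2 ≤ μ) (hb : 0 < b) (hb1 : b < 1)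
    (hμ' : μ + (1 - b) ≤ μ') (hN : μ < b * N) (hX₀ : 0 ≤ X₀) (hbX : b ≤ pendantGrowth μ N * X₀) :
    1 < pendantGrowth μ' N * X₀ := by
  have hX₀' : 0 < X₀ := hX₀.lt_of_ne (by rintro rfl; rw [mul_zero] at hbX; linarith)
  have := mul_lt_mul_of_pos_right (pendantGrowth_lt_mul_pendantGrowth hμ hb hb1 hμ' hN) hX₀'
  nlinarith

lemma one_lt_pendantGrowth_succ_mul (hμ : 1874 ≤ μ) (hN : (N : ℝ) ≤ 2 * (μ - 1)) (hlam : 2 ≤ lam)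
    (hlamμ : lam ≤ μ + 1) (hX₀ : 0 ≤ X₀) (hb : 3 / 5 ≤ pendantGrowth lam N * X₀) :
    1 < pendantGrowth μ (N + 1) * X₀ := by
  have hμ2 : 2 ≤ μ := by linarith
  have hF := pendantGrowth_nonneg hμ2 N
  have h55 : pendantGrowth lam N ≤ 55 * pendantGrowth μ N :=
    calc pendantGrowth lam N ≤ pendantGrowth (μ + 1) N := pendantGrowth_mono hlam hlamμ N
      _ ≤ pendantGrowth μ N * Real.exp (2 * N / (μ - 1)) := pendantGrowth_add_one_le hμ2 N
      _ ≤ pendantGrowth μ N * Real.exp 4 := by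
          gcongr
          rw [div_le_iff₀ (by linarith)]; linarith
      _ ≤ 55 * pendantGrowth μ N := by nlinarith [exp_four_lt]
  have hsucc : (μ - 1) * pendantGrowth μ N ≤ pendantGrowth μ (N + 1) := by
    rw [pendantGrowth_succ, mul_comm]
    exact mul_le_mul_of_nonneg_left (sub_one_le_pendantRatio hμ2 N) hF
  have : 3 / 5 ≤ 55 * (pendantGrowth μ N * X₀) := by nlinarith
  nlinarith

end Cases

theorem lt_of_pendant_path_bounds {n k : ℕ} {lam : ℝ} {X : ℕ → ℝ} (hn : 5000 ≤ n) (hk : 2 ≤ k)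
    (hkn : k ≤ n) (hX : ∀ i, 0 ≤ X i) (htop : lam ≤ n - k + X (k - 2)) (hb : X (k - 2) < 1)
    (hstart : X 1 ≤ lam * X 0)
    (hstep : ∀ i, i + 2 ≤ k - 2 → X i + X (i + 2) ≤ lam * X (i + 1))
    (hkite : ∀ r, 2 ≤ r → r + 2 ≤ n → pendantGrowth (n - r : ℕ) (r - 1) * X 0 ≤ 1) :
    lam < n - k + 3 / 5 := by
  by_contra! hlam
  have hm : ((n - k : ℕ) : ℝ) = n - k := by push_cast [hkn]; ring
  have hb35 : 3 / 5 ≤ X (k - 2) := by linarith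
  rcases le_or_gt (n - k) 1 with hsmall | hlarge
  · have hm1 : ((n - k : ℕ) : ℝ) ≤ 1 := by exact_mod_cast hsmall
    have hup : X (k - 2) ≤ lam ^ (k - 2) * X 0 := le_pow_mul (by linarith) hX hstart hstep
    refine (hkite (n - 5) (by omega) (by omega)).not_gt ?_
    rw [show n - (n - 5) = 5 by omega, show n - 5 - 1 = n - 6 by omega]
    exact one_lt_pendantGrowth_five_mul (by omega) hkn (by linarith) (by linarith) (hX 0)
      (hb35.trans hup)
  have hlam2 : 2 ≤ lam := by
    have : (2 : ℝ) ≤ (n - k : ℕ) := by exact_mod_cast hlarge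
    linarith
  have hup : X (k - 2) ≤ pendantGrowth lam (k - 2) * X 0 := le_pendantGrowth_mul hlam2 hstart hstep
  have hk2 : ((k - 2 : ℕ) : ℝ) = k - 2 := by push_cast [hk]; ring
  rcases le_or_gt (5 * n + 12) (8 * k) with hlong | hshort
  · refine (hkite (k - 1) (by omega) (by omega)).not_gt ?_
    rw [show k - 1 - 1 = k - 2 by omega]
    have hn' : ((n - (k - 1) : ℕ) : ℝ) = n - k + 1 := by
      rw [show n - (k - 1) = n - k + 1 by omega]; push_cast [hm]; ring
    have hlong' : (5 * n + 12 : ℝ) ≤ 8 * k := by exact_mod_cast hlong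
    refine one_lt_pendantGrowth_mul_of_lt hlam2 (by linarith) hb (by linarith) ?_ (hX 0) hup
    rw [hk2]; nlinarith
  · refine (hkite k hk (by omega)).not_gt ?_
    rw [show k - 1 = k - 2 + 1 by omega]
    refine one_lt_pendantGrowth_succ_mul (by exact_mod_cast (by omega : 1874 ≤ n - k)) ?_
      hlam2 (by linarith) (hX 0) (hb35.trans hup)
    rw [hk2]
    have : (k : ℝ) ≤ 2 * (n - k : ℕ) := by exact_mod_cast (by omega : k ≤ 2 * (n - k))
    linarith

section ShortestPath

variable {V : Type*} {G : SimpleGraph V} {k : ℕ} {v : Fin k → V}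

lemma exists_walk_length_eq_of_path
    (hpath : ∀ (i : ℕ) (hi : i + 1 < k), G.Adj (v ⟨i, by omega⟩) (v ⟨i + 1, hi⟩))
    (j : ℕ) (hj : j < k) : ∃ p : G.Walk (v ⟨0, by omega⟩) (v ⟨j, hj⟩), p.length = j := by
  induction j with
  | zero => exact ⟨.nil, rfl⟩
  | succ j ih =>
    obtain ⟨p, hp⟩ := ih (by omega)
    exact ⟨p.concat (hpath j hj), by rw [SimpleGraph.Walk.length_concat, hp]⟩

lemma dist_le_of_path
    (hpath : ∀ (i : ℕ) (hi : i + 1 < k), G.Adj (v ⟨i, by omega⟩) (v ⟨i + 1, hi⟩))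
    (j : ℕ) (hj : j < k) : G.dist (v ⟨0, by omega⟩) (v ⟨j, hj⟩) ≤ j := by
  obtain ⟨p, hp⟩ := exists_walk_length_eq_of_path hpath j hj
  exact (SimpleGraph.dist_le p).trans_eq hp

lemma not_adj_of_path
    (hpath : ∀ (i : ℕ) (hi : i + 1 < k), G.Adj (v ⟨i, by omega⟩) (v ⟨i + 1, hi⟩))
    {j : ℕ} (hj : j + 2 < k) (hlen : k - 1 ≤ G.dist (v ⟨0, by omega⟩) (v ⟨k - 1, by omega⟩)) :
    ¬ G.Adj (v ⟨j, by omega⟩) (v ⟨k - 1, by omega⟩) := by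
  intro h
  obtain ⟨p, hp⟩ := exists_walk_length_eq_of_path hpath j (by omega)
  have := SimpleGraph.dist_le (p.concat h)
  rw [SimpleGraph.Walk.length_concat, hp] at this
  omega

end ShortestPath

lemma IsPrincipalEigenpair.le_sub_add_of_path {n k : ℕ} {G : SimpleGraph (Fin n)} {lam : ℝ}
    {x : Fin n → ℝ} (hpe : IsPrincipalEigenpair G lam x) (hx1 : ∀ u, x u ≤ 1) (hk : 2 ≤ k)
    {v : Fin k → Fin n} (hinj : Function.Injective v)
    (hpath : ∀ (i : ℕ) (hi : i + 1 < k), G.Adj (v ⟨i, by omega⟩) (v ⟨i + 1, hi⟩))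
    (htop : x (v ⟨k - 1, by omega⟩) = 1)
    (hlen : k - 1 ≤ G.dist (v ⟨0, by omega⟩) (v ⟨k - 1, by omega⟩)) :
    lam ≤ n - k + x (v ⟨k - 2, by omega⟩) := by
  set B := (univ.erase (⟨k - 2, by omega⟩ : Fin k)).image v
  have hB : #B = k - 1 := by
    rw [card_image_of_injective _ hinj, card_erase_of_mem (mem_univ _), card_univ,
      Fintype.card_fin]
  have := hpe.le_sub_card_add hx1 htop (B := B) (w := v ⟨k - 2, by omega⟩) ?_ ?_
  · rw [hB, Nat.cast_sub (by omega)] at this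
    push_cast at this
    linarith
  · simp only [B, mem_image, mem_erase]
    rintro _ ⟨⟨j, hj⟩, ⟨hne, -⟩, rfl⟩ hadj
    simp only [ne_eq, Fin.mk.injEq] at hne
    rcases (by omega : j = k - 1 ∨ j + 2 < k) with rfl | hj2
    · exact G.irrefl hadj
    · exact not_adj_of_path hpath hj2 hlen hadj.symm
  · simp [B, hinj.eq_iff]

/-- Extremal setup: `G` is a connected graph on `n ≥ 5000` vertices maximizing the
principal ratio among all connected graphs on `n` vertices; `x` is its principal
eigenvector scaled so that the maximum entry is `1`; `v 0, …, v (k-1)` is a shortest path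
from a minimum-entry vertex to a maximum-entry vertex, where `k - 1` is the shortest
distance between any minimum-entry vertex and any maximum-entry vertex. -/
theorem spectral_radius_upper_bound
    {n k : ℕ} (hn : 5000 ≤ n) (hk : 2 ≤ k)
    (G : SimpleGraph (Fin n))
    (lam : ℝ) (x : Fin n → ℝ)
    (hpe : IsPrincipalEigenpair G lam x)
    (hx1 : ∀ u, x u ≤ 1)
    (hext : ∀ (G' : SimpleGraph (Fin n)), G'.Connected →
      ∀ (lam' : ℝ) (x' : Fin n → ℝ), IsPrincipalEigenpair G' lam' x' →
        pRatio x' ≤ pRatio x)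
    (v : Fin k → Fin n) (hinj : Function.Injective v)
    (hpath : ∀ (i : ℕ) (hi : i + 1 < k), G.Adj (v ⟨i, by omega⟩) (v ⟨i + 1, hi⟩))
    (hmin : ∀ u, x (v ⟨0, by omega⟩) ≤ x u)
    (hvk : x (v ⟨k - 1, by omega⟩) = 1)
    (hshort : ∀ a b : Fin n, (∀ u, x a ≤ x u) → x b = 1 → k - 1 ≤ G.dist a b) :
    lam < (n : ℝ) - k + 3 / 5 := by
  have hkn : k ≤ n := by simpa using Fintype.card_le_of_injective v hinj
  set X : ℕ → ℝ := fun i => if h : i < k then x (v ⟨i, h⟩) else 0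
  have hX : ∀ i (h : i < k), X i = x (v ⟨i, h⟩) := fun i h => dif_pos h
  refine lt_of_pendant_path_bounds (X := X) hn hk hkn ?nonneg ?top ?pred ?start ?step ?kite
  case nonneg => intro i; unfold X; split_ifs; exacts [(hpe.1 _).le, le_rfl]
  case top =>
    rw [hX _ (by omega)]
    exact hpe.le_sub_add_of_path hx1 hk hinj hpath hvk (hshort _ _ hmin hvk)
  case pred =>
    rw [hX _ (by omega)]
    refine (hx1 _).lt_of_ne fun h => ?_
    have := (hshort _ _ hmin h).trans (dist_le_of_path hpath (k - 2) (by omega))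
    omega
  case start =>
    rw [hX 0 (by omega), hX 1 (by omega)]
    simpa using hpe.sum_le_mul_apply (s := {v ⟨1, by omega⟩}) (by simpa using hpath 0 (by omega))
  case step =>
    intro i hi
    rw [hX i (by omega), hX (i + 1) (by omega), hX (i + 2) (by omega),
      ← sum_pair (f := x) (by simp [hinj.eq_iff])]
    refine hpe.sum_le_mul_apply ?_
    simpa using ⟨(hpath i (by omega)).symm, hpath (i + 1) (by omega)⟩
  case kite =>
    intro r hr hrn
    have hconn := kiteGraph_connected (n := n) (r := r) (by omega)
    obtain ⟨lam', y, hy⟩ := exists_isPrincipalEigenpair hconn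
    have := (pendantGrowth_le_pRatio_kite hr hrn hy).trans (hext _ hconn _ _ hy)
    rwa [pRatio_eq_div_s15 (fun u => hvk ▸ hx1 u) hmin, hvk, ← hX 0 (by omega),
      le_div_iff₀ (by rw [hX 0 (by omega)]; exact hpe.1 _)] at this
end
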